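/- Suppose φ ∈ M_n(JCB(V × W, M_m)) and there exists a net (φ_λ) of completely nuclear bilinear maps in M_n(N(V × W, M_m)) with ‖φ_λ‖_N ≤ C for all λ and φ_λ(v,w) → φ(v,w) for all v ∈ V, w ∈ W. Then φ is completely integral with ‖φ‖_I ≤ C. -/

import Mathlib

/- ## A lightweight framework for operator spaces (matrix norms, Ruan's axioms) -/

noncomputable section
open scoped TensorProduct

/-- The operator norm (`ℓ² → ℓ²`) of a rectangular complex scalar matrix. -/
def cnorm {m n : ℕ} (α : Matrix (Fin m) (Fin n) ℂ) : ℝ :=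
  ‖LinearMap.toContinuousLinearMap (Matrix.toEuclideanLin α)‖

/-- A (complex) vector space equipped with a family of "matrix norms", one on each
matrix level `M_n(X)`.  No axioms are imposed at this stage. -/
structure MatNormed where
  X : Type
  [grp : AddCommGroup X]
  [mod : Module ℂ X]
  N : (n : ℕ) → Matrix (Fin n) (Fin n) X → ℝ

attribute [instance] MatNormed.grp MatNormed.mod

/-- Ruan's axioms `M1`, `M2` together with the requirement that every level is a norm. -/
def RuanAxioms (M : MatNormed) : Prop :=
  (∀ (n : ℕ) (v : Matrix (Fin n) (Fin n) M.X), 0 ≤ M.N n v) ∧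
  (∀ (n : ℕ) (v w : Matrix (Fin n) (Fin n) M.X), M.N n (v + w) ≤ M.N n v + M.N n w) ∧
  (∀ (n : ℕ) (c : ℂ) (v : Matrix (Fin n) (Fin n) M.X), M.N n (c • v) = ‖c‖ * M.N n v) ∧
  (∀ (n : ℕ) (v : Matrix (Fin n) (Fin n) M.X), M.N n v = 0 → v = 0) ∧
  (∀ (n m : ℕ) (v : Matrix (Fin n) (Fin n) M.X) (w : Matrix (Fin m) (Fin m) M.X),
    M.N (n + m) (Matrix.reindex finSumFinEquiv finSumFinEquiv (Matrix.fromBlocks v 0 0 w)) =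
      max (M.N n v) (M.N m w)) ∧
  (∀ (n m : ℕ) (α : Matrix (Fin m) (Fin n) ℂ) (v : Matrix (Fin n) (Fin n) M.X)
      (β : Matrix (Fin n) (Fin m) ℂ),
    M.N m (fun i j => ∑ k, ∑ l, (α i k * β l j) • v k l) ≤ cnorm α * M.N n v * cnorm β)

/-- An operator space: matrix norms satisfying Ruan's axioms. -/
structure OpSpace extends MatNormed where
  ruan : RuanAxioms toMatNormed

/-- The underlying matrix-normed space of an operator space. -/
abbrev OpSpace.m (V : OpSpace) : MatNormed := V.toMatNormed

/-- Flattening `M_m(M_n(X)) → M_{mn}(X)`. -/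
def flat {X : Type} {m n : ℕ} (A : Matrix (Fin m) (Fin m) (Matrix (Fin n) (Fin n) X)) :
    Matrix (Fin (m * n)) (Fin (m * n)) X := fun p q =>
  A (finProdFinEquiv.symm p).1 (finProdFinEquiv.symm q).1
    (finProdFinEquiv.symm p).2 (finProdFinEquiv.symm q).2

/-- The scalars `ℂ` with their canonical operator space matrix norms. -/
abbrev scalarMN : MatNormed :=
  { X := ℂ, N := fun _ A => cnorm A }

/-- The matrix level `M_n(Z)` of a matrix-normed space, with its canonical matrix norms. -/
abbrev MatNormed.matLevel (Z : MatNormed) (n : ℕ) : MatNormed :=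
  { X := Matrix (Fin n) (Fin n) Z.X, N := fun k A => Z.N (k * n) (flat A) }

/-- A subspace of a matrix-normed space, with the inherited matrix norms. -/
abbrev subMN (V : MatNormed) (F : Submodule ℂ V.X) : MatNormed :=
  { X := ↥F, N := fun k v => V.N k (fun i j => ((v i j : V.X))) }

/-- Entrywise amplification of a (linear) map. -/
def lamp {V W : Type} (r : V → W) {k : ℕ} (v : Matrix (Fin k) (Fin k) V) :
    Matrix (Fin k) (Fin k) W := fun i j => r (v i j)

/-- `r` is completely bounded with constant `C`. -/
def CBWith (V W : MatNormed) (r : V.X → W.X) (C : ℝ) : Prop :=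
  0 ≤ C ∧ ∀ (k : ℕ) (v : Matrix (Fin k) (Fin k) V.X), W.N k (lamp r v) ≤ C * V.N k v

/-- Completely bounded linear maps. -/
def CompletelyBounded (V W : MatNormed) (r : V.X → W.X) : Prop :=
  IsLinearMap ℂ r ∧ ∃ C, CBWith V W r C

/-- The completely bounded norm. -/
def cbNorm (V W : MatNormed) (r : V.X → W.X) : ℝ := sInf {C | CBWith V W r C}

/-- A complete isometry. -/
def CompleteIsometry (V W : MatNormed) (j : V.X → W.X) : Prop :=
  IsLinearMap ℂ j ∧ ∀ (k : ℕ) (v : Matrix (Fin k) (Fin k) V.X), W.N k (lamp j v) = V.N k v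

/-- Bilinearity of a two-variable map. -/
def IsBilinMap {V W T : Type} [AddCommGroup V] [Module ℂ V] [AddCommGroup W] [Module ℂ W]
    [AddCommGroup T] [Module ℂ T] (φ : V → W → T) : Prop :=
  (∀ w, IsLinearMap ℂ (fun v => φ v w)) ∧ (∀ v, IsLinearMap ℂ (φ v))

/-- The "joint" amplification `φ_k : M_k × M_k → M_{k²}` of a bilinear map. -/
def jamp {V W Z : Type} (φ : V → W → Z) {k : ℕ}
    (v : Matrix (Fin k) (Fin k) V) (w : Matrix (Fin k) (Fin k) W) :
    Matrix (Fin (k * k)) (Fin (k * k)) Z := fun p q =>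
  φ (v (finProdFinEquiv.symm p).1 (finProdFinEquiv.symm q).1)
    (w (finProdFinEquiv.symm p).2 (finProdFinEquiv.symm q).2)

/-- `φ` is jointly completely bounded with constant `C`. -/
def JCBWith (V W Z : MatNormed) (φ : V.X → W.X → Z.X) (C : ℝ) : Prop :=
  0 ≤ C ∧ ∀ (k : ℕ) (v : Matrix (Fin k) (Fin k) V.X) (w : Matrix (Fin k) (Fin k) W.X),
    Z.N (k * k) (jamp φ v w) ≤ C * V.N k v * W.N k w

/-- Jointly completely bounded bilinear maps. -/
def JCB (V W Z : MatNormed) (φ : V.X → W.X → Z.X) : Prop :=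
  IsBilinMap φ ∧ ∃ C, JCBWith V W Z φ C

/-- The jointly completely bounded norm. -/
def jcbNorm (V W Z : MatNormed) (φ : V.X → W.X → Z.X) : ℝ := sInf {C | JCBWith V W Z φ C}

/-- The "multiplicative" amplification `φ_(k)` (using matrix multiplication). -/
def mamp {V W Z : Type} [AddCommMonoid Z] (φ : V → W → Z) {k : ℕ}
    (v : Matrix (Fin k) (Fin k) V) (w : Matrix (Fin k) (Fin k) W) :
    Matrix (Fin k) (Fin k) Z := fun i j => ∑ l, φ (v i l) (w l j)

/-- `φ` is multiplicatively bounded with constant `C`. -/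
def MBWith (V W Z : MatNormed) (φ : V.X → W.X → Z.X) (C : ℝ) : Prop :=
  0 ≤ C ∧ ∀ (k : ℕ) (v : Matrix (Fin k) (Fin k) V.X) (w : Matrix (Fin k) (Fin k) W.X),
    Z.N k (mamp φ v w) ≤ C * V.N k v * W.N k w

/-- Multiplicatively bounded bilinear maps. -/
def MB (V W Z : MatNormed) (φ : V.X → W.X → Z.X) : Prop :=
  IsBilinMap φ ∧ ∃ C, MBWith V W Z φ C

/-- The multiplicatively bounded norm. -/
def mbNorm (V W Z : MatNormed) (φ : V.X → W.X → Z.X) : ℝ := sInf {C | MBWith V W Z φ C}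

/-- Finite type bilinear maps `φ(v,w) = ∑ f i (v) * g i (w) • x i` with bounded functionals. -/
def FiniteType (V W Z : MatNormed) (φ : V.X → W.X → Z.X) : Prop :=
  ∃ (k : ℕ) (f : Fin k → (V.X →ₗ[ℂ] ℂ)) (g : Fin k → (W.X →ₗ[ℂ] ℂ)) (x : Fin k → Z.X),
    (∀ i, ∃ C, CBWith V scalarMN (f i) C) ∧ (∀ i, ∃ C, CBWith W scalarMN (g i) C) ∧
    ∀ v w, φ v w = ∑ i, (f i v * g i w) • x i

/- ## Duals -/

/-- Amplification pairing a `p × p` matrix of functionals with a `k × k` matrix of vectors. -/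
def dampl {V : Type} [AddCommGroup V] [Module ℂ V] {p k : ℕ}
    (f : Matrix (Fin p) (Fin p) (V →ₗ[ℂ] ℂ))
    (v : Matrix (Fin k) (Fin k) V) : Matrix (Fin (k * p)) (Fin (k * p)) ℂ :=
  flat (fun i j => Matrix.of fun a b => f a b (v i j))

/-- The norm of a matrix of functionals, i.e. the matrix norm of `M_p(V*)`
(equivalently the cb-norm of the associated map `V → M_p`). -/
def dualN (V : MatNormed) {p : ℕ} (f : Matrix (Fin p) (Fin p) (V.X →ₗ[ℂ] ℂ)) : ℝ :=
  sInf {C | 0 ≤ C ∧ ∀ (k : ℕ) (v : Matrix (Fin k) (Fin k) V.X),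
    cnorm (dampl f v) ≤ C * V.N k v}

/-- Norm of a row vector of scalars. -/
def rowNorm {k : ℕ} (α : Fin k → ℂ) : ℝ := cnorm (Matrix.of fun (_ : Fin 1) s => α s)

/-- Norm of a column vector of scalars. -/
def colNorm {k : ℕ} (β : Fin k → ℂ) : ℝ := cnorm (Matrix.of fun s (_ : Fin 1) => β s)

lemma cnorm_add_le {m n : ℕ} (A B : Matrix (Fin m) (Fin n) ℂ) :
    cnorm (A + B) ≤ cnorm A + cnorm B := by
  simp only [cnorm, map_add]; exact norm_add_le _ _

lemma cnorm_smul {m n : ℕ} (c : ℂ) (A : Matrix (Fin m) (Fin n) ℂ) :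
    cnorm (c • A) = ‖c‖ * cnorm A := by
  simp only [cnorm, map_smul]
  exact norm_smul c (LinearMap.toContinuousLinearMap (Matrix.toEuclideanLin A))

lemma cnorm_zero {m n : ℕ} : cnorm (0 : Matrix (Fin m) (Fin n) ℂ) = 0 := by
  simp [cnorm]

/-- The completely bounded functionals on `W`, as a submodule of the linear dual. -/
def cbDual (W : MatNormed) : Submodule ℂ (W.X →ₗ[ℂ] ℂ) where
  carrier := {f | ∃ C, CBWith W scalarMN f C}
  add_mem' := by
    rintro f g ⟨Cf, hCf, hf⟩ ⟨Cg, hCg, hg⟩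
    refine ⟨Cf + Cg, by positivity, fun k v => ?_⟩
    have : lamp (⇑(f + g)) v = lamp (⇑f) v + lamp (⇑g) v := by
      funext i j; simp [lamp]
    calc scalarMN.N k (lamp (⇑(f + g)) v) = cnorm (lamp (⇑f) v + lamp (⇑g) v) := by rw [this]
    _ ≤ cnorm (lamp (⇑f) v) + cnorm (lamp (⇑g) v) := cnorm_add_le _ _
    _ ≤ Cf * W.N k v + Cg * W.N k v := add_le_add (hf k v) (hg k v)
    _ = (Cf + Cg) * W.N k v := by ring
  zero_mem' := by
    refine ⟨0, le_refl 0, fun k v => ?_⟩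
    have : lamp (⇑(0 : W.X →ₗ[ℂ] ℂ)) v = (0 : Matrix (Fin k) (Fin k) ℂ) := by
      funext i j; simp [lamp]
    rw [this]; simp [cnorm_zero]
  smul_mem' := by
    rintro c f ⟨C, hC, hf⟩
    refine ⟨‖c‖ * C, by positivity, fun k v => ?_⟩
    have : lamp (⇑(c • f)) v = c • lamp (⇑f) v := by
      funext i j; simp [lamp]
    rw [this]
    show cnorm _ ≤ _
    rw [cnorm_smul, mul_assoc]
    exact mul_le_mul_of_nonneg_left (hf k v) (norm_nonneg c)

/-- The operator space dual `W*` (completely bounded functionals with the dual matrix norms). -/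
abbrev dualMN (W : MatNormed) : MatNormed :=
  { X := ↥(cbDual W),
    N := fun _ F => dualN W (fun a b => ((F a b : W.X →ₗ[ℂ] ℂ))) }

/- ## Completely nuclear and completely integral bilinear maps -/

def tidx3 {p q r : ℕ} (s : Fin (p * q * r)) : Fin p × Fin q × Fin r :=
  ⟨(finProdFinEquiv.symm (finProdFinEquiv.symm s).1).1,
   (finProdFinEquiv.symm (finProdFinEquiv.symm s).1).2,
   (finProdFinEquiv.symm s).2⟩

/-- An elementary representation `α (f ⊗ g ⊗ x) β` of a bilinear map, as used to define the
projective norm of `(V* ⊗̂ W*) ⊗̂ Z` and hence the completely nuclear norm. -/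
structure NucRep (V W Z : MatNormed) where
  p : ℕ
  q : ℕ
  r : ℕ
  f : Matrix (Fin p) (Fin p) (V.X →ₗ[ℂ] ℂ)
  g : Matrix (Fin q) (Fin q) (W.X →ₗ[ℂ] ℂ)
  x : Matrix (Fin r) (Fin r) Z.X
  α : Fin (p * q * r) → ℂ
  β : Fin (p * q * r) → ℂ
  hf : ∃ C, 0 ≤ C ∧ ∀ (k : ℕ) (v : Matrix (Fin k) (Fin k) V.X), cnorm (dampl f v) ≤ C * V.N k v
  hg : ∃ C, 0 ≤ C ∧ ∀ (k : ℕ) (w : Matrix (Fin k) (Fin k) W.X), cnorm (dampl g w) ≤ C * W.N k w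

/-- The bilinear map determined by an elementary representation. -/
def nucEval {V W Z : MatNormed} (R : NucRep V W Z) (v : V.X) (w : W.X) : Z.X :=
  ∑ s, ∑ t, (R.α s * R.β t) •
    ((R.f (tidx3 s).1 (tidx3 t).1 v * R.g (tidx3 s).2.1 (tidx3 t).2.1 w) •
      R.x (tidx3 s).2.2 (tidx3 t).2.2)

/-- The value `‖α‖ ‖f‖ ‖g‖ ‖x‖ ‖β‖` of an elementary representation. -/
def nucVal {V W Z : MatNormed} (R : NucRep V W Z) : ℝ :=
  rowNorm R.α * dualN V R.f * dualN W R.g * Z.N R.r R.x * colNorm R.β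

/-- Convergence of a series with respect to the first-level norm of `Z`. -/
def NSum (Z : MatNormed) (f : ℕ → Z.X) (a : Z.X) : Prop :=
  ∀ ε > (0 : ℝ), ∃ M : ℕ, ∀ m ≥ M,
    Z.N 1 (fun _ _ => a - ∑ i ∈ Finset.range m, f i) < ε

/-- `φ` is completely nuclear with nuclear norm at most `C`. -/
def NucBoundedBy (V W Z : MatNormed) (φ : V.X → W.X → Z.X) (C : ℝ) : Prop :=
  0 ≤ C ∧ ∃ R : ℕ → NucRep V W Z,
    (∀ v w, NSum Z (fun m => nucEval (R m) v w) (φ v w)) ∧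
    ∀ M : ℕ, ∑ m ∈ Finset.range M, nucVal (R m) ≤ C

/-- The completely nuclear norm (the quotient norm induced by `Ψ : (V*⊗̂W*)⊗̂Z → JCB(V×W,Z)`). -/
def nucNorm (V W Z : MatNormed) (φ : V.X → W.X → Z.X) : ℝ :=
  sInf {C | NucBoundedBy V W Z φ C}

/-- Completely nuclear bilinear maps. -/
def CompletelyNuclear (V W Z : MatNormed) (φ : V.X → W.X → Z.X) : Prop :=
  IsBilinMap φ ∧ ∃ C, NucBoundedBy V W Z φ C

/-- `φ` is completely integral with integral norm at most `C`: every restriction to a pair of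
finite-dimensional subspaces has completely nuclear norm at most `C`. -/
def IntBoundedBy (V W Z : MatNormed) (φ : V.X → W.X → Z.X) (C : ℝ) : Prop :=
  0 ≤ C ∧ ∀ (F₁ : Submodule ℂ V.X) (F₂ : Submodule ℂ W.X),
    FiniteDimensional ℂ ↥F₁ → FiniteDimensional ℂ ↥F₂ →
    nucNorm (subMN V F₁) (subMN W F₂) Z (fun v w => φ (v : V.X) (w : W.X)) ≤ C

/-- The completely integral norm. -/
def intNorm (V W Z : MatNormed) (φ : V.X → W.X → Z.X) : ℝ :=
  sInf {C | IntBoundedBy V W Z φ C}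

/-- Completely integral bilinear maps. -/
def CompletelyIntegral (V W Z : MatNormed) (φ : V.X → W.X → Z.X) : Prop :=
  IsBilinMap φ ∧ ∃ C, IntBoundedBy V W Z φ C

/- ## Completely nuclear and completely integral linear maps -/

/-- An elementary representation `α (f ⊗ x) β` of a linear map. -/
structure LinNucRep (V Z : MatNormed) where
  p : ℕ
  r : ℕ
  f : Matrix (Fin p) (Fin p) (V.X →ₗ[ℂ] ℂ)
  x : Matrix (Fin r) (Fin r) Z.X
  α : Fin (p * r) → ℂ
  β : Fin (p * r) → ℂ
  hf : ∃ C, 0 ≤ C ∧ ∀ (k : ℕ) (v : Matrix (Fin k) (Fin k) V.X), cnorm (dampl f v) ≤ C * V.N k v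

def linNucEval {V Z : MatNormed} (R : LinNucRep V Z) (v : V.X) : Z.X :=
  ∑ s, ∑ t, (R.α s * R.β t) •
    (R.f (finProdFinEquiv.symm s).1 (finProdFinEquiv.symm t).1 v •
      R.x (finProdFinEquiv.symm s).2 (finProdFinEquiv.symm t).2)

def linNucVal {V Z : MatNormed} (R : LinNucRep V Z) : ℝ :=
  rowNorm R.α * dualN V R.f * Z.N R.r R.x * colNorm R.β

/-- A linear map is completely nuclear with nuclear norm at most `C`. -/
def LinNucBoundedBy (V Z : MatNormed) (φ : V.X → Z.X) (C : ℝ) : Prop :=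
  0 ≤ C ∧ ∃ R : ℕ → LinNucRep V Z,
    (∀ v, NSum Z (fun m => linNucEval (R m) v) (φ v)) ∧
    ∀ M : ℕ, ∑ m ∈ Finset.range M, linNucVal (R m) ≤ C

def linNucNorm (V Z : MatNormed) (φ : V.X → Z.X) : ℝ := sInf {C | LinNucBoundedBy V Z φ C}

def LinCompletelyNuclear (V Z : MatNormed) (φ : V.X → Z.X) : Prop :=
  IsLinearMap ℂ φ ∧ ∃ C, LinNucBoundedBy V Z φ C

def LinIntBoundedBy (V Z : MatNormed) (φ : V.X → Z.X) (C : ℝ) : Prop :=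
  0 ≤ C ∧ ∀ (F : Submodule ℂ V.X), FiniteDimensional ℂ ↥F →
    linNucNorm (subMN V F) Z (fun v => φ (v : V.X)) ≤ C

def linIntNorm (V Z : MatNormed) (φ : V.X → Z.X) : ℝ := sInf {C | LinIntBoundedBy V Z φ C}

def LinCompletelyIntegral (V Z : MatNormed) (φ : V.X → Z.X) : Prop :=
  IsLinearMap ℂ φ ∧ ∃ C, LinIntBoundedBy V Z φ C

/- ## Tensor products -/

/-- The functional `f ⊗ g` on `V ⊗ W`. -/
def pairLF {V W : Type} [AddCommGroup V] [Module ℂ V] [AddCommGroup W] [Module ℂ W]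
    (f : V →ₗ[ℂ] ℂ) (g : W →ₗ[ℂ] ℂ) : (V ⊗[ℂ] W) →ₗ[ℂ] ℂ :=
  TensorProduct.lift ((LinearMap.mul ℂ ℂ).compl₁₂ f g)

/-- The matrix tensor product `M_p(A) × M_q(B) → M_{pq}(A ⊗ B)`. -/
def matTen {A B : Type} [AddCommGroup A] [Module ℂ A] [AddCommGroup B] [Module ℂ B]
    {p q : ℕ} (v : Matrix (Fin p) (Fin p) A) (w : Matrix (Fin q) (Fin q) B) :
    Matrix (Fin (p * q)) (Fin (p * q)) (A ⊗[ℂ] B) := fun s t =>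
  v (finProdFinEquiv.symm s).1 (finProdFinEquiv.symm t).1 ⊗ₜ[ℂ]
    w (finProdFinEquiv.symm s).2 (finProdFinEquiv.symm t).2

/-- The injective operator space tensor norm on `M_n(V ⊗ W)`. -/
def injN (V W : MatNormed) (n : ℕ) (u : Matrix (Fin n) (Fin n) (V.X ⊗[ℂ] W.X)) : ℝ :=
  sSup {c | ∃ (p q : ℕ) (f : Matrix (Fin p) (Fin p) (V.X →ₗ[ℂ] ℂ))
      (g : Matrix (Fin q) (Fin q) (W.X →ₗ[ℂ] ℂ)),
      (∀ (k : ℕ) (v : Matrix (Fin k) (Fin k) V.X), cnorm (dampl f v) ≤ V.N k v) ∧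
      (∀ (k : ℕ) (w : Matrix (Fin k) (Fin k) W.X), cnorm (dampl g w) ≤ W.N k w) ∧
      c = cnorm (flat (fun i j => Matrix.of fun s t =>
        pairLF (f (finProdFinEquiv.symm s).1 (finProdFinEquiv.symm t).1)
          (g (finProdFinEquiv.symm s).2 (finProdFinEquiv.symm t).2) (u i j)))}

/-- `T` (an operator space) realizes the injective operator space tensor product `V ⊗̌ W`
via the bilinear map `ι`. -/
def IsInjTensor (V W T : OpSpace) (ι : V.X →ₗ[ℂ] W.X →ₗ[ℂ] T.X) : Prop :=
  Function.Bijective (TensorProduct.lift ι) ∧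
  ∀ (n : ℕ) (u : Matrix (Fin n) (Fin n) (V.X ⊗[ℂ] W.X)),
    T.N n (lamp (TensorProduct.lift ι) u) = injN V.m W.m n u

/-- The projective operator space tensor norm on `M_n(A ⊗ B)`. -/
def projN (A B : MatNormed) (n : ℕ) (u : Matrix (Fin n) (Fin n) (A.X ⊗[ℂ] B.X)) : ℝ :=
  sInf {c | ∃ (p q : ℕ) (v : Matrix (Fin p) (Fin p) A.X) (w : Matrix (Fin q) (Fin q) B.X)
      (α : Matrix (Fin n) (Fin (p * q)) ℂ) (β : Matrix (Fin (p * q)) (Fin n) ℂ),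
      (u = fun i j => ∑ s, ∑ t, (α i s * β t j) • matTen v w s t) ∧
      c = cnorm α * A.N p v * B.N q w * cnorm β}

/-- Padding a rectangular matrix to a square one. -/
def padSquare {X : Type} [Zero X] {n r : ℕ} (v : Matrix (Fin n) (Fin r) X) :
    Matrix (Fin (n + r)) (Fin (n + r)) X := fun i j =>
  if h : (i : ℕ) < n then (if h' : (j : ℕ) < r then v ⟨i, h⟩ ⟨j, h'⟩ else 0) else 0

/-- The norm of a rectangular matrix over a matrix-normed space. -/
def rectN (A : MatNormed) {n r : ℕ} (v : Matrix (Fin n) (Fin r) A.X) : ℝ :=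
  A.N (n + r) (padSquare v)

/-- The Haagerup operator space tensor norm on `M_n(A ⊗ B)`. -/
def haagN (A B : MatNormed) (n : ℕ) (u : Matrix (Fin n) (Fin n) (A.X ⊗[ℂ] B.X)) : ℝ :=
  sInf {c | ∃ (r : ℕ) (v : Matrix (Fin n) (Fin r) A.X) (w : Matrix (Fin r) (Fin n) B.X),
    (u = fun i j => ∑ k, v i k ⊗ₜ[ℂ] w k j) ∧ c = rectN A v * rectN B w}

/-- The transpose flip `M_n(V ⊗ W) → M_n(W ⊗ V)`. -/
def tflip {V W : Type} [AddCommGroup V] [Module ℂ V] [AddCommGroup W] [Module ℂ W]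
    {n : ℕ} (u : Matrix (Fin n) (Fin n) (V ⊗[ℂ] W)) :
    Matrix (Fin n) (Fin n) (W ⊗[ℂ] V) := fun i j => TensorProduct.comm ℂ V W (u j i)

/-- The intersection `(V ⊗_h W) ∩ (W ⊗_h V)` with its natural matrix norms. -/
abbrev interMN (V W : MatNormed) : MatNormed :=
  { X := V.X ⊗[ℂ] W.X,
    N := fun n u => max (haagN V W n u) (haagN W V n (tflip u)) }

/- ## Symmetrized multiplicatively bounded maps -/

/-- `φ` decomposes as `φ₁ + φ₂` with `φ₁` multiplicatively bounded and the transpose of `φ₂`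
multiplicatively bounded, with total constant at most `C`. -/
def SMBWith (V W Z : MatNormed) (φ : V.X → W.X → Z.X) (C : ℝ) : Prop :=
  ∃ (φ₁ φ₂ : V.X → W.X → Z.X) (C₁ C₂ : ℝ),
    (∀ v w, φ v w = φ₁ v w + φ₂ v w) ∧ IsBilinMap φ₁ ∧ IsBilinMap φ₂ ∧
    MBWith V W Z φ₁ C₁ ∧ MBWith W V Z (fun w v => φ₂ v w) C₂ ∧ C₁ + C₂ ≤ C

/-- The symmetrized multiplicatively bounded norm. -/
def smbNorm (V W Z : MatNormed) (φ : V.X → W.X → Z.X) : ℝ := sInf {C | SMBWith V W Z φ C}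

/- ## Extendibility -/

/-- `φ` admits, for the fixed super-spaces `A ⊇ V`, `B ⊇ W` (via `jV`, `jW`), a jointly
completely bounded bilinear extension with constant at most `C`. -/
def ExtWith (V W Z A B : MatNormed) (jV : V.X → A.X) (jW : W.X → B.X)
    (φ : V.X → W.X → Z.X) (C : ℝ) : Prop :=
  ∃ ψ : A.X → B.X → Z.X, IsBilinMap ψ ∧ JCBWith A B Z ψ C ∧ ∀ v w, ψ (jV v) (jW w) = φ v w

/-- The extendible norm relative to the fixed embeddings `jV`, `jW`. -/
def extNormVia (V W Z A B : MatNormed) (jV : V.X → A.X) (jW : W.X → B.X)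
    (φ : V.X → W.X → Z.X) : ℝ := sInf {C | ExtWith V W Z A B jV jW φ C}

/-- `φ` is completely extendible: it admits jointly completely bounded bilinear extensions
to arbitrary operator space super-spaces. -/
def CompletelyExtendible (V W Z : MatNormed) (φ : V.X → W.X → Z.X) : Prop :=
  ∀ (A B : OpSpace) (jV : V.X → A.X) (jW : W.X → B.X),
    CompleteIsometry V A.m jV → CompleteIsometry W B.m jW →
    ∃ ψ : A.X → B.X → Z.X, IsBilinMap ψ ∧ (∃ C, JCBWith A.m B.m Z ψ C) ∧
      ∀ v w, ψ (jV v) (jW w) = φ v w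

/-- `L(H)`, the bounded operators on a Hilbert space `H`, with its canonical matrix norms
(`M_n(L(H))` acting on `H^n` with its ℓ²-norm). -/
abbrev LH (H : Type) [NormedAddCommGroup H] [InnerProductSpace ℂ H] : MatNormed :=
  { X := H →L[ℂ] H,
    N := fun n A => sInf {C | 0 ≤ C ∧ ∀ x : Fin n → H,
      Real.sqrt (∑ i, ‖∑ j, (A i j) (x j)‖ ^ 2) ≤ C * Real.sqrt (∑ j, ‖x j‖ ^ 2)} }

/- ## Operator space tensor norms -/

/-- An operator space tensor norm: an assignment of matrix norms to every algebraic tensor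
product of operator spaces, satisfying Ruan's axioms, the cross-norm property and the
completely metric mapping property. -/
structure OSTensorNorm where
  tn : ∀ (V W : OpSpace) (n : ℕ), Matrix (Fin n) (Fin n) (V.X ⊗[ℂ] W.X) → ℝ
  ruan : ∀ V W : OpSpace, RuanAxioms { X := V.X ⊗[ℂ] W.X, N := tn V W }
  cross : ∀ (V W : OpSpace) (p q : ℕ) (v : Matrix (Fin p) (Fin p) V.X)
      (w : Matrix (Fin q) (Fin q) W.X), tn V W (p * q) (matTen v w) = V.N p v * W.N q w
  mapping : ∀ (U₁ V U₂ W : OpSpace) (r₁ : U₁.X →ₗ[ℂ] V.X) (r₂ : U₂.X →ₗ[ℂ] W.X) (C₁ C₂ : ℝ),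
    CBWith U₁.m V.m (⇑r₁) C₁ → CBWith U₂.m W.m (⇑r₂) C₂ →
    CBWith { X := U₁.X ⊗[ℂ] U₂.X, N := tn U₁ U₂ } { X := V.X ⊗[ℂ] W.X, N := tn V W }
      (⇑(TensorProduct.map r₁ r₂)) (C₁ * C₂)

/-- The matrix-normed space `V ⊗_α W` determined by an operator space tensor norm. -/
abbrev OSTensorNorm.mn (t : OSTensorNorm) (V W : OpSpace) : MatNormed :=
  { X := V.X ⊗[ℂ] W.X, N := t.tn V W }


/-!
On finite-dimensional `F₁ ⊆ V` and `F₂ ⊆ W` every linear functional is bounded for the first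
matrix norm, hence completely bounded by Ruan's axiom M2. Expanding in bases, every bilinear `θ`
on `F₁ × F₂` is therefore a finite sum of rank-one nuclear terms whose total value is controlled by
the finitely many values of `θ` on pairs of basis vectors. Pointwise convergence makes these values
small for `θ = φ - φ_λ` and a suitable `λ`, so on `F₁ × F₂` the map `φ` is `φ_λ`, of nuclear norm
below `C + ε/2`, plus a finite nuclear correction of value below `ε/2`.
-/

open scoped ComplexConjugate

lemma cnorm_nonneg {m n : ℕ} (A : Matrix (Fin m) (Fin n) ℂ) : 0 ≤ cnorm A := norm_nonneg _

lemma continuous_cnorm {m n : ℕ} : Continuous (cnorm : Matrix (Fin m) (Fin n) ℂ → ℝ) :=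
  continuous_norm.comp (LinearMap.continuous_of_finiteDimensional
    (Matrix.toEuclideanLin.trans (LinearMap.toContinuousLinearMap :
      _ ≃ₗ[ℂ] (EuclideanSpace ℂ (Fin n) →L[ℂ] EuclideanSpace ℂ (Fin m)))).toLinearMap)

lemma cnorm_le_of_forall_inner_le {m n : ℕ} (A : Matrix (Fin m) (Fin n) ℂ) {C : ℝ} (hC : 0 ≤ C)
    (h : ∀ (x : EuclideanSpace ℂ (Fin m)) (y : EuclideanSpace ℂ (Fin n)),
      ‖∑ p, ∑ q, conj (x p) * A p q * y q‖ ≤ C * ‖x‖ * ‖y‖) :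
    cnorm A ≤ C := by
  refine ContinuousLinearMap.opNorm_le_bound _ hC fun y => ?_
  set z := Matrix.toEuclideanLin A y
  have hzp : ∀ p, z p = ∑ q, A p q * y q := fun p => by
    simp [z, Matrix.toLpLin_apply, Matrix.mulVec, dotProduct]
  have hz : ‖z‖ ^ 2 ≤ C * ‖z‖ * ‖y‖ := by
    have hinner : (inner ℂ z z : ℂ) = ∑ p, ∑ q, conj (z p) * A p q * y q := by
      simp only [PiLp.inner_apply, RCLike.inner_apply]
      refine Finset.sum_congr rfl fun p _ => ?_
      rw [mul_comm]
      nth_rw 2 [hzp p]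
      rw [Finset.mul_sum]
      simp only [mul_assoc]
    simpa [← hinner, inner_self_eq_norm_sq_to_K] using h z y
  show ‖z‖ ≤ C * ‖y‖
  rcases (norm_nonneg z).eq_or_lt with hz0 | hz0
  · rw [← hz0]; positivity
  · exact le_of_mul_le_mul_left (by nlinarith) hz0

lemma rowNorm_nonneg {k : ℕ} (α : Fin k → ℂ) : 0 ≤ rowNorm α := cnorm_nonneg _

lemma colNorm_nonneg {k : ℕ} (β : Fin k → ℂ) : 0 ≤ colNorm β := cnorm_nonneg _

lemma rowNorm_le {k : ℕ} (α : Fin k → ℂ) : rowNorm α ≤ √(∑ s, ‖α s‖ ^ 2) := by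
  refine cnorm_le_of_forall_inner_le _ (Real.sqrt_nonneg _) fun x y => ?_
  set a : EuclideanSpace ℂ (Fin k) := WithLp.toLp 2 fun s => conj (α s)
  have ha : ‖a‖ = √(∑ s, ‖α s‖ ^ 2) := by simp [a, EuclideanSpace.norm_eq]
  have hsum : ∑ p : Fin 1, ∑ q, conj (x p) * Matrix.of (fun _ s => α s) p q * y q
      = conj (x 0) * inner ℂ a y := by
    simp [a, PiLp.inner_apply, Finset.mul_sum, mul_assoc, mul_comm (α _)]
  rw [hsum, norm_mul, RCLike.norm_conj, ← ha]
  calc ‖x 0‖ * ‖inner ℂ a y‖ ≤ ‖x‖ * (‖a‖ * ‖y‖) :=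
        mul_le_mul (PiLp.norm_apply_le x 0) (norm_inner_le_norm a y) (norm_nonneg _)
          (norm_nonneg _)
    _ = ‖a‖ * ‖x‖ * ‖y‖ := by ring

lemma colNorm_le {k : ℕ} (β : Fin k → ℂ) : colNorm β ≤ √(∑ s, ‖β s‖ ^ 2) := by
  refine cnorm_le_of_forall_inner_le _ (Real.sqrt_nonneg _) fun x y => ?_
  set b : EuclideanSpace ℂ (Fin k) := WithLp.toLp 2 β
  have hb : ‖b‖ = √(∑ s, ‖β s‖ ^ 2) := by simp [b, EuclideanSpace.norm_eq]
  have hsum : ∑ p, ∑ q : Fin 1, conj (x p) * Matrix.of (fun s _ => β s) p q * y q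
      = inner ℂ x b * y 0 := by
    simp [b, PiLp.inner_apply, Finset.mul_sum, mul_comm]
  rw [hsum, norm_mul, ← hb]
  calc ‖inner ℂ x b‖ * ‖y 0‖ ≤ (‖x‖ * ‖b‖) * ‖y‖ :=
        mul_le_mul (norm_inner_le_norm x b) (PiLp.norm_apply_le y 0) (norm_nonneg _)
          (by positivity)
    _ = ‖b‖ * ‖x‖ * ‖y‖ := by ring

lemma sum_fin_mul_one {M : Type*} [AddCommMonoid M] {k : ℕ} (g : Fin (k * 1) → M) :
    ∑ p, g p = ∑ a, g (finProdFinEquiv (a, 0)) := by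
  rw [← finProdFinEquiv.sum_comp, Fintype.sum_prod_type]
  simp

namespace OpSpace

variable (V : OpSpace)

lemma N_nonneg {k : ℕ} (v : Matrix (Fin k) (Fin k) V.X) : 0 ≤ V.N k v := V.ruan.1 k v

lemma N_add_le {k : ℕ} (v w : Matrix (Fin k) (Fin k) V.X) : V.N k (v + w) ≤ V.N k v + V.N k w :=
  V.ruan.2.1 k v w

lemma N_smul {k : ℕ} (c : ℂ) (v : Matrix (Fin k) (Fin k) V.X) : V.N k (c • v) = ‖c‖ * V.N k v :=
  V.ruan.2.2.1 k c v

lemma N_zero (k : ℕ) : V.N k 0 = 0 := by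
  simpa using V.N_smul (0 : ℂ) (0 : Matrix (Fin k) (Fin k) V.X)

lemma eq_zero_of_N_eq_zero {k : ℕ} {v : Matrix (Fin k) (Fin k) V.X} (h : V.N k v = 0) : v = 0 :=
  V.ruan.2.2.2.1 k v h

lemma N_mul_mul_le {n m : ℕ} (α : Matrix (Fin m) (Fin n) ℂ) (v : Matrix (Fin n) (Fin n) V.X)
    (β : Matrix (Fin n) (Fin m) ℂ) :
    V.N m (fun i j => ∑ k, ∑ l, (α i k * β l j) • v k l) ≤ cnorm α * V.N n v * cnorm β :=
  V.ruan.2.2.2.2.2 n m α v β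

lemma exists_bound_of_finiteDimensional (F : Submodule ℂ V.X) [FiniteDimensional ℂ F]
    (f : F →ₗ[ℂ] ℂ) : ∃ c, 0 ≤ c ∧ ∀ x : F, ‖f x‖ ≤ c * V.N 1 (fun _ _ => (x : V.X)) := by
  let : Norm F := ⟨fun x => V.N 1 (fun _ _ => (x : V.X))⟩
  have core : NormedSpace.Core ℂ F :=
    { norm_nonneg := fun _ => V.N_nonneg _
      norm_smul := fun c x => V.N_smul c (fun _ _ => (x : V.X))
      norm_triangle := fun x y => V.N_add_le (fun _ _ => (x : V.X)) (fun _ _ => (y : V.X))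
      norm_eq_zero_iff := fun x => by
        refine ⟨fun h => Subtype.ext (congrFun (congrFun (V.eq_zero_of_N_eq_zero h) 0) 0), ?_⟩
        rintro rfl
        exact V.N_zero 1 }
  let := NormedAddCommGroup.ofCore core
  let := NormedSpace.ofCore core
  exact ⟨‖LinearMap.toContinuousLinearMap f‖, norm_nonneg _,
    (LinearMap.toContinuousLinearMap f).le_opNorm⟩

lemma cnorm_dampl_le (F : Submodule ℂ V.X) (f : F →ₗ[ℂ] ℂ) {c : ℝ} (hc0 : 0 ≤ c)
    (hc : ∀ x : F, ‖f x‖ ≤ c * V.N 1 (fun _ _ => (x : V.X))) (k : ℕ)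
    (v : Matrix (Fin k) (Fin k) F) :
    cnorm (dampl (fun _ _ => f : Matrix (Fin 1) (Fin 1) (F →ₗ[ℂ] ℂ)) v) ≤
      c * (subMN V.m F).N k v := by
  set S : Matrix (Fin k) (Fin k) V.X := fun i j => v i j
  refine cnorm_le_of_forall_inner_le _ (mul_nonneg hc0 (V.N_nonneg S)) fun x y => ?_
  set u : F := ∑ p, ∑ q, (conj (x p) * y q) • v (finProdFinEquiv.symm p).1
    (finProdFinEquiv.symm q).1
  have hfu : ∑ p, ∑ q, conj (x p) * dampl (fun _ _ => f : Matrix (Fin 1) (Fin 1) _) v p q * y q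
      = f u := by
    simp only [u, map_sum, map_smul, smul_eq_mul]
    exact Finset.sum_congr rfl fun p _ => Finset.sum_congr rfl fun q _ => by
      simp only [dampl, flat, Matrix.of_apply]; ring
  set α : Fin k → ℂ := fun a => conj (x (finProdFinEquiv (a, 0)))
  set β : Fin k → ℂ := fun b => y (finProdFinEquiv (b, 0))
  have hu : (fun _ _ => (u : V.X) : Matrix (Fin 1) (Fin 1) V.X) =
      fun i j => ∑ a, ∑ b, (Matrix.of (fun _ a => α a) i a * Matrix.of (fun b _ => β b) b j) •
        S a b := by
    funext i j
    simp only [u, Submodule.coe_sum, Submodule.coe_smul, sum_fin_mul_one, Matrix.of_apply,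
      Equiv.symm_apply_apply, α, β, S]
  have hα : rowNorm α ≤ ‖x‖ := by
    refine (rowNorm_le α).trans_eq ?_
    simp [α, EuclideanSpace.norm_eq, sum_fin_mul_one (fun p => ‖x p‖ ^ 2)]
  have hβ : colNorm β ≤ ‖y‖ := by
    refine (colNorm_le β).trans_eq ?_
    simp [β, EuclideanSpace.norm_eq, sum_fin_mul_one (fun p => ‖y p‖ ^ 2)]
  have hNu : V.N 1 (fun _ _ => (u : V.X)) ≤ ‖x‖ * V.N k S * ‖y‖ := by
    rw [hu]
    refine (V.N_mul_mul_le _ S _).trans ?_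
    exact mul_le_mul (mul_le_mul_of_nonneg_right hα (V.N_nonneg S)) hβ (cnorm_nonneg _)
      (mul_nonneg (norm_nonneg x) (V.N_nonneg S))
  rw [hfu]
  calc ‖f u‖ ≤ c * V.N 1 (fun _ _ => (u : V.X)) := hc u
    _ ≤ c * (‖x‖ * V.N k S * ‖y‖) := by gcongr
    _ = c * V.N k S * ‖x‖ * ‖y‖ := by ring

end OpSpace

def seqPrepend {α : Type*} {L : ℕ} (g : Fin L → α) (f : ℕ → α) (t : ℕ) : α :=
  if h : t < L then g ⟨t, h⟩ else f (t - L)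

lemma apply_seqPrepend {α β : Type*} {L : ℕ} (F : α → β) (g : Fin L → α) (f : ℕ → α) (t : ℕ) :
    F (seqPrepend g f t) = seqPrepend (fun i => F (g i)) (fun t => F (f t)) t := by
  unfold seqPrepend
  split_ifs <;> rfl

lemma sum_range_seqPrepend {α M : Type*} [AddCommMonoid M] {L : ℕ} (g : Fin L → α) (f : ℕ → α)
    (F : α → M) (n : ℕ) :
    ∑ t ∈ Finset.range (L + n), F (seqPrepend g f t) =
      ∑ i, F (g i) + ∑ t ∈ Finset.range n, F (f t) := by
  rw [Finset.sum_range_add, ← Fin.sum_univ_eq_sum_range]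
  simp [seqPrepend]

lemma NSum.seqPrepend {Z : MatNormed} {f : ℕ → Z.X} {a : Z.X} (h : NSum Z f a) {L : ℕ}
    (g : Fin L → Z.X) : NSum Z (seqPrepend g f) (∑ i, g i + a) := by
  intro ε hε
  obtain ⟨M₀, hM₀⟩ := h ε hε
  refine ⟨L + M₀, fun M hM => ?_⟩
  obtain ⟨n, rfl⟩ : ∃ n, M = L + n := ⟨M - L, by omega⟩
  have hsum := sum_range_seqPrepend g f id n
  simp only [id] at hsum
  rw [hsum, add_sub_add_left_eq_sub]
  exact hM₀ n (by omega)

section NuclearRepresentations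

variable {V W Z : MatNormed}

lemma dualN_nonneg {p : ℕ} (f : Matrix (Fin p) (Fin p) (V.X →ₗ[ℂ] ℂ)) : 0 ≤ dualN V f :=
  Real.sInf_nonneg fun _ hC => hC.1

lemma dualN_le {p : ℕ} {f : Matrix (Fin p) (Fin p) (V.X →ₗ[ℂ] ℂ)} {c : ℝ} (hc0 : 0 ≤ c)
    (hc : ∀ (k : ℕ) (v : Matrix (Fin k) (Fin k) V.X), cnorm (dampl f v) ≤ c * V.N k v) :
    dualN V f ≤ c :=
  csInf_le ⟨0, fun _ hC => hC.1⟩ ⟨hc0, hc⟩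

lemma dualN_comp_subtype_le (F : Submodule ℂ V.X) {p : ℕ}
    {f : Matrix (Fin p) (Fin p) (V.X →ₗ[ℂ] ℂ)}
    (hf : ∃ C, 0 ≤ C ∧ ∀ (k : ℕ) (v : Matrix (Fin k) (Fin k) V.X),
      cnorm (dampl f v) ≤ C * V.N k v) :
    dualN (subMN V F) (fun a b => (f a b).comp F.subtype) ≤ dualN V f :=
  csInf_le_csInf ⟨0, fun _ hC => hC.1⟩ hf fun _ ⟨hC0, hC⟩ =>
    ⟨hC0, fun k v => hC k fun i j => v i j⟩

lemma nucVal_nonneg (hZ : ∀ (k : ℕ) (x : Matrix (Fin k) (Fin k) Z.X), 0 ≤ Z.N k x)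
    (R : NucRep V W Z) : 0 ≤ nucVal R := by
  have := rowNorm_nonneg R.α
  have := colNorm_nonneg R.β
  have := dualN_nonneg R.f
  have := dualN_nonneg R.g
  have := hZ R.r R.x
  unfold nucVal
  positivity

def NucRep.rankOne (f : V.X →ₗ[ℂ] ℂ) (g : W.X →ₗ[ℂ] ℂ) (z : Z.X)
    (hf : ∃ C, 0 ≤ C ∧ ∀ (k : ℕ) (v : Matrix (Fin k) (Fin k) V.X),
      cnorm (dampl (fun _ _ => f : Matrix (Fin 1) (Fin 1) _) v) ≤ C * V.N k v)
    (hg : ∃ C, 0 ≤ C ∧ ∀ (k : ℕ) (w : Matrix (Fin k) (Fin k) W.X),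
      cnorm (dampl (fun _ _ => g : Matrix (Fin 1) (Fin 1) _) w) ≤ C * W.N k w) :
    NucRep V W Z where
  p := 1
  q := 1
  r := 1
  f := fun _ _ => f
  g := fun _ _ => g
  x := fun _ _ => z
  α := fun _ => 1
  β := fun _ => 1
  hf := hf
  hg := hg

lemma nucEval_rankOne (f : V.X →ₗ[ℂ] ℂ) (g : W.X →ₗ[ℂ] ℂ) (z : Z.X) (hf hg) (v : V.X)
    (w : W.X) : nucEval (NucRep.rankOne f g z hf hg) v w = (f v * g w) • z := by
  unfold nucEval NucRep.rankOne
  dsimp only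
  rw [Fin.sum_univ_one, Fin.sum_univ_one]
  simp

lemma nucVal_rankOne_le (f : V.X →ₗ[ℂ] ℂ) (g : W.X →ₗ[ℂ] ℂ) (z : Z.X) (hf hg)
    (hz : 0 ≤ Z.N 1 (fun _ _ => z)) :
    nucVal (NucRep.rankOne f g z hf hg) ≤
      dualN V (fun _ _ => f : Matrix (Fin 1) (Fin 1) _) *
        dualN W (fun _ _ => g : Matrix (Fin 1) (Fin 1) _) * Z.N 1 (fun _ _ => z) := by
  have hrow : rowNorm (fun _ : Fin (1 * 1 * 1) => (1 : ℂ)) ≤ 1 := (rowNorm_le _).trans (by simp)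
  have hcol : colNorm (fun _ : Fin (1 * 1 * 1) => (1 : ℂ)) ≤ 1 := (colNorm_le _).trans (by simp)
  have := dualN_nonneg (fun _ _ => f : Matrix (Fin 1) (Fin 1) (V.X →ₗ[ℂ] ℂ))
  have := dualN_nonneg (fun _ _ => g : Matrix (Fin 1) (Fin 1) (W.X →ₗ[ℂ] ℂ))
  calc nucVal (NucRep.rankOne f g z hf hg)
      ≤ 1 * dualN V (fun _ _ => f : Matrix (Fin 1) (Fin 1) _) *
        dualN W (fun _ _ => g : Matrix (Fin 1) (Fin 1) _) * Z.N 1 (fun _ _ => z) * 1 := by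
        unfold nucVal NucRep.rankOne
        gcongr
        exact colNorm_nonneg _
    _ = _ := by ring

def NucRep.restrict (F₁ : Submodule ℂ V.X) (F₂ : Submodule ℂ W.X) (R : NucRep V W Z) :
    NucRep (subMN V F₁) (subMN W F₂) Z where
  p := R.p
  q := R.q
  r := R.r
  f := fun a b => (R.f a b).comp F₁.subtype
  g := fun a b => (R.g a b).comp F₂.subtype
  x := R.x
  α := R.α
  β := R.β
  hf := by
    obtain ⟨C, hC0, hC⟩ := R.hf
    exact ⟨C, hC0, fun k v => hC k fun i j => v i j⟩
  hg := by
    obtain ⟨C, hC0, hC⟩ := R.hg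
    exact ⟨C, hC0, fun k w => hC k fun i j => w i j⟩

lemma nucVal_restrict_le (F₁ : Submodule ℂ V.X) (F₂ : Submodule ℂ W.X) (R : NucRep V W Z)
    (hZ : 0 ≤ Z.N R.r R.x) : nucVal (R.restrict F₁ F₂) ≤ nucVal R := by
  have hrow := rowNorm_nonneg R.α
  have hf := dualN_comp_subtype_le F₁ R.hf
  have hg := dualN_comp_subtype_le F₂ R.hg
  have hf0 := dualN_nonneg R.f
  have hg0 := dualN_nonneg (R.restrict F₁ F₂).g
  unfold nucVal
  exact mul_le_mul_of_nonneg_right (mul_le_mul_of_nonneg_right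
    (mul_le_mul (mul_le_mul_of_nonneg_left hf hrow) hg hg0 (mul_nonneg hrow hf0)) hZ)
    (colNorm_nonneg R.β)

lemma nucNorm_le {φ : V.X → W.X → Z.X} {C : ℝ} (h : NucBoundedBy V W Z φ C) :
    nucNorm V W Z φ ≤ C :=
  csInf_le ⟨0, fun _ hD => hD.1⟩ h

lemma intNorm_le {φ : V.X → W.X → Z.X} {C : ℝ} (h : IntBoundedBy V W Z φ C) :
    intNorm V W Z φ ≤ C :=
  csInf_le ⟨0, fun _ hD => hD.1⟩ h

namespace NucBoundedBy

lemma mono {φ : V.X → W.X → Z.X} {C C' : ℝ} (h : NucBoundedBy V W Z φ C) (hC : C ≤ C') :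
    NucBoundedBy V W Z φ C' := by
  obtain ⟨hC0, R, hR, hval⟩ := h
  exact ⟨hC0.trans hC, R, hR, fun M => (hval M).trans hC⟩

variable (hZ : ∀ (k : ℕ) (x : Matrix (Fin k) (Fin k) Z.X), 0 ≤ Z.N k x)
include hZ

lemma restrict {φ : V.X → W.X → Z.X} {C : ℝ} (h : NucBoundedBy V W Z φ C)
    (F₁ : Submodule ℂ V.X) (F₂ : Submodule ℂ W.X) :
    NucBoundedBy (subMN V F₁) (subMN W F₂) Z (fun v w => φ v w) C := by
  obtain ⟨hC0, R, hR, hval⟩ := h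
  refine ⟨hC0, fun t => (R t).restrict F₁ F₂, fun v w => hR v w, fun M => ?_⟩
  exact (Finset.sum_le_sum fun t _ => nucVal_restrict_le F₁ F₂ (R t) (hZ _ _)).trans (hval M)

lemma add_sum {ψ : V.X → W.X → Z.X} {D : ℝ} (h : NucBoundedBy V W Z ψ D) {L : ℕ}
    (S : Fin L → NucRep V W Z) :
    NucBoundedBy V W Z (fun v w => ∑ j, nucEval (S j) v w + ψ v w) (∑ j, nucVal (S j) + D) := by
  obtain ⟨hD0, R, hR, hval⟩ := h
  refine ⟨add_nonneg (Finset.sum_nonneg fun j _ => nucVal_nonneg hZ (S j)) hD0,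
    seqPrepend S R, fun v w => ?_, fun M => ?_⟩
  · have hseq : (fun t => nucEval (seqPrepend S R t) v w) =
        seqPrepend (fun j => nucEval (S j) v w) (fun t => nucEval (R t) v w) :=
      funext (apply_seqPrepend (fun P => nucEval P v w) S R)
    rw [hseq]
    exact (hR v w).seqPrepend _
  · calc ∑ t ∈ Finset.range M, nucVal (seqPrepend S R t)
        ≤ ∑ t ∈ Finset.range (L + M), nucVal (seqPrepend S R t) :=
          Finset.sum_le_sum_of_subset_of_nonneg (Finset.range_subset_range.mpr (by omega))
            fun t _ _ => nucVal_nonneg hZ _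
      _ = ∑ j, nucVal (S j) + ∑ t ∈ Finset.range M, nucVal (R t) :=
          sum_range_seqPrepend S R nucVal M
      _ ≤ ∑ j, nucVal (S j) + D := by gcongr; exact hval M

end NucBoundedBy

end NuclearRepresentations

namespace IsBilinMap

variable {A B T : Type} [AddCommGroup A] [Module ℂ A] [AddCommGroup B] [Module ℂ B]
  [AddCommGroup T] [Module ℂ T] {θ : A → B → T}

lemma sub {θ' : A → B → T} (h : IsBilinMap θ) (h' : IsBilinMap θ') :
    IsBilinMap (fun v w => θ v w - θ' v w) :=
  ⟨fun w => (IsLinearMap.mk' _ (h.1 w) - IsLinearMap.mk' _ (h'.1 w)).isLinear,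
    fun v => (IsLinearMap.mk' _ (h.2 v) - IsLinearMap.mk' _ (h'.2 v)).isLinear⟩

lemma restrict (h : IsBilinMap θ) (F : Submodule ℂ A) (G : Submodule ℂ B) :
    IsBilinMap (fun (v : F) (w : G) => θ v w) :=
  ⟨fun w => ((IsLinearMap.mk' _ (h.1 w)).comp F.subtype).isLinear,
    fun v => ((IsLinearMap.mk' _ (h.2 v)).comp G.subtype).isLinear⟩

lemma eq_sum_basis (h : IsBilinMap θ) {ι₁ ι₂ : Type} [Fintype ι₁] [Fintype ι₂]
    (b₁ : Module.Basis ι₁ ℂ A) (b₂ : Module.Basis ι₂ ℂ B) (v : A) (w : B) :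
    θ v w = ∑ a, ∑ b, (b₁.repr v a * b₂.repr w b) • θ (b₁ a) (b₂ b) := by
  let Θ : A →ₗ[ℂ] B →ₗ[ℂ] T := LinearMap.mk₂ ℂ θ (fun x y w => (h.1 w).map_add x y)
    (fun c x w => (h.1 w).map_smul c x) (fun v x y => (h.2 v).map_add x y)
    (fun c v x => (h.2 v).map_smul c x)
  change Θ v w = ∑ a, ∑ b, (b₁.repr v a * b₂.repr w b) • Θ (b₁ a) (b₂ b)
  conv_lhs => rw [← b₁.sum_repr v, ← b₂.sum_repr w]
  simp only [map_sum, map_smul, LinearMap.sum_apply, LinearMap.smul_apply, Finset.smul_sum,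
    smul_smul, mul_comm]
  exact Finset.sum_comm

end IsBilinMap

theorem exists_nucRep_sum_of_finiteDimensional (V W : OpSpace) (Z : MatNormed)
    (hZ : ∀ (k : ℕ) (x : Matrix (Fin k) (Fin k) Z.X), 0 ≤ Z.N k x)
    (F₁ : Submodule ℂ V.X) (F₂ : Submodule ℂ W.X) [FiniteDimensional ℂ F₁]
    [FiniteDimensional ℂ F₂] :
    ∃ (L : ℕ) (x : Fin L → F₁) (y : Fin L → F₂) (κ : Fin L → ℝ),
      ∀ θ : F₁ → F₂ → Z.X, IsBilinMap θ →
        ∃ S : Fin L → NucRep (subMN V.m F₁) (subMN W.m F₂) Z,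
          (∀ v w, θ v w = ∑ j, nucEval (S j) v w) ∧
          ∑ j, nucVal (S j) ≤ ∑ j, κ j * Z.N 1 (fun _ _ => θ (x j) (y j)) := by
  set b₁ := Module.finBasis ℂ F₁
  set b₂ := Module.finBasis ℂ F₂
  choose κ₁ hκ₁0 hκ₁ using fun a => V.exists_bound_of_finiteDimensional F₁ (b₁.coord a)
  choose κ₂ hκ₂0 hκ₂ using fun b => W.exists_bound_of_finiteDimensional F₂ (b₂.coord b)
  have hf := fun a => V.cnorm_dampl_le F₁ (b₁.coord a) (hκ₁0 a) (hκ₁ a)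
  have hg := fun b => W.cnorm_dampl_le F₂ (b₂.coord b) (hκ₂0 b) (hκ₂ b)
  let e := (finProdFinEquiv (m := Module.finrank ℂ F₁) (n := Module.finrank ℂ F₂)).symm
  refine ⟨_, fun j => b₁ (e j).1, fun j => b₂ (e j).2, fun j => κ₁ (e j).1 * κ₂ (e j).2,
    fun θ hθ => ⟨fun j => NucRep.rankOne (b₁.coord (e j).1) (b₂.coord (e j).2)
      (θ (b₁ (e j).1) (b₂ (e j).2)) ⟨_, hκ₁0 _, hf _⟩ ⟨_, hκ₂0 _, hg _⟩, fun v w => ?_, ?_⟩⟩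
  · simp only [nucEval_rankOne, Module.Basis.coord_apply]
    rw [hθ.eq_sum_basis b₁ b₂ v w, ← Fintype.sum_prod_type', ← e.sum_comp]
  · refine Finset.sum_le_sum fun j _ => (nucVal_rankOne_le _ _ _ _ _ (hZ _ _)).trans ?_
    exact mul_le_mul_of_nonneg_right (mul_le_mul (dualN_le (hκ₁0 _) (hf _))
      (dualN_le (hκ₂0 _) (hg _)) (dualN_nonneg _) (hκ₁0 _)) (hZ _ _)

lemma continuous_matLevel_N (m n k : ℕ) : Continuous (((scalarMN.matLevel m).matLevel n).N k) :=
  continuous_cnorm.comp (by unfold flat; fun_prop)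

lemma tendsto_matLevel_N_sub {m n : ℕ} {ι : Type} {l : Filter ι}
    {d : ι → Matrix (Fin n) (Fin n) (Matrix (Fin m) (Fin m) ℂ)}
    {d₀ : Matrix (Fin n) (Fin n) (Matrix (Fin m) (Fin m) ℂ)} (h : Filter.Tendsto d l (nhds d₀)) :
    Filter.Tendsto (fun i => ((scalarMN.matLevel m).matLevel n).N 1 (fun _ _ => d₀ - d i)) l
      (nhds 0) := by
  have hsub : Filter.Tendsto (fun i _ _ => d₀ - d i) l
      (nhds (0 : Matrix (Fin 1) (Fin 1) (Matrix (Fin n) (Fin n) (Matrix (Fin m) (Fin m) ℂ)))) :=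
    tendsto_pi_nhds.2 fun _ => tendsto_pi_nhds.2 fun _ => by
      simpa using (tendsto_const_nhds (x := d₀)).sub h
  have h0 : ((scalarMN.matLevel m).matLevel n).N 1 0 = 0 := cnorm_zero
  exact h0 ▸ ((continuous_matLevel_N m n 1).tendsto 0).comp hsub

theorem stmt6_general (V W : OpSpace) (m n : ℕ) (ι : Type) (l : Filter ι) [l.NeBot] (C : ℝ)
    (hC0 : 0 ≤ C)
    (φs : ι → V.X → W.X → Matrix (Fin n) (Fin n) (Matrix (Fin m) (Fin m) ℂ))
    (φ : V.X → W.X → Matrix (Fin n) (Fin n) (Matrix (Fin m) (Fin m) ℂ))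
    (hbil : ∀ i, IsBilinMap (φs i)) (hφbil : IsBilinMap φ)
    (hnuc : ∀ i, ∃ D, NucBoundedBy V.m W.m ((scalarMN.matLevel m).matLevel n) (φs i) D)
    (hCn : ∀ i, nucNorm V.m W.m ((scalarMN.matLevel m).matLevel n) (φs i) ≤ C)
    (hconv : ∀ x y, Filter.Tendsto (fun i => φs i x y) l (nhds (φ x y))) :
    CompletelyIntegral V.m W.m ((scalarMN.matLevel m).matLevel n) φ ∧
      intNorm V.m W.m ((scalarMN.matLevel m).matLevel n) φ ≤ C := by
  set Z := (scalarMN.matLevel m).matLevel n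
  have hZ : ∀ (k : ℕ) (x : Matrix (Fin k) (Fin k) Z.X), 0 ≤ Z.N k x := fun _ _ => cnorm_nonneg _
  suffices H : IntBoundedBy V.m W.m Z φ C from ⟨⟨hφbil, C, H⟩, intNorm_le H⟩
  refine ⟨hC0, fun F₁ F₂ _ _ => le_of_forall_pos_le_add fun ε hε => nucNorm_le ?_⟩
  obtain ⟨L, x, y, κ, hdecomp⟩ := exists_nucRep_sum_of_finiteDimensional V W Z hZ F₁ F₂
  have hsmall := tendsto_finsetSum Finset.univ fun j _ =>
    (tendsto_matLevel_N_sub (hconv (x j) (y j))).const_mul (κ j)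
  simp only [mul_zero, Finset.sum_const_zero] at hsmall
  obtain ⟨i, hi⟩ := (hsmall.eventually_lt_const (half_pos hε)).exists
  obtain ⟨D, hD : NucBoundedBy _ _ _ _ D, hDC⟩ :=
    exists_lt_of_csInf_lt (hnuc i) ((hCn i).trans_lt (by linarith : C < C + ε / 2))
  obtain ⟨S, hS, hSval⟩ := hdecomp _ ((hφbil.sub (hbil i)).restrict F₁ F₂)
  have hφ : (fun (v : F₁) (w : F₂) => φ v w) = fun v w => ∑ j, nucEval (S j) v w + φs i v w := by
    funext v w
    rw [← hS, sub_add_cancel]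
  rw [hφ]
  exact ((hD.restrict hZ F₁ F₂).add_sum hZ S).mono (by linarith)

/-- a pointwise limit (over a net) of completely nuclear bilinear maps into `M_m`
with nuclear norms uniformly bounded by `C` is completely integral, with `‖φ‖_I ≤ C`. -/
theorem stmt6 (V W : OpSpace) (m n : ℕ) (ι : Type) (l : Filter ι) [l.NeBot] (C : ℝ)
    (hC0 : 0 ≤ C)
    (φs : ι → V.X → W.X → Matrix (Fin n) (Fin n) (Matrix (Fin m) (Fin m) ℂ))
    (φ : V.X → W.X → Matrix (Fin n) (Fin n) (Matrix (Fin m) (Fin m) ℂ))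
    (hbil : ∀ i, IsBilinMap (φs i)) (hφbil : IsBilinMap φ)
    (hjcb : ∃ D, JCBWith V.m W.m ((scalarMN.matLevel m).matLevel n) φ D)
    (hnuc : ∀ i, ∃ D, NucBoundedBy V.m W.m ((scalarMN.matLevel m).matLevel n) (φs i) D)
    (hCn : ∀ i, nucNorm V.m W.m ((scalarMN.matLevel m).matLevel n) (φs i) ≤ C)
    (hconv : ∀ x y, Filter.Tendsto (fun i => φs i x y) l (nhds (φ x y))) :
    CompletelyIntegral V.m W.m ((scalarMN.matLevel m).matLevel n) φ ∧
      intNorm V.m W.m ((scalarMN.matLevel m).matLevel n) φ ≤ C :=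
  stmt6_general V W m n ι l C hC0 φs φ hbil hφbil hnuc hCn hconv

end
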